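/- arXiv:2012.13793 — 2 statements merged into one kernel-verified Lean document; each statement's English description precedes it below -/
import Mathlib

section
/- Let {a_n}_{n∈ℤ} and {b_n}_{n∈ℤ} be real bounded sequences. Define ã_n = min(a_n, 1), b̃⁺_n = [b_n]_+ + (a_{n−1}−1)_+ + (a_n−1)_+ and b̃⁻_n = −[b_n]_− − (a_{n−1}−1)_+ − (a_n−1)_+. Then the corresponding Jacobi operators on ℓ²(ℤ) satisfy the operator inequalities W({ã_n},{b̃⁻_n}) ≤ W({a_n},{b_n}) ≤ W({ã_n},{b̃⁺_n}), i.e., ⟨u, W({ã_n},{b̃⁻_n}) u⟩ ≤ ⟨u, W({a_n},{b_n}) u⟩ ≤ ⟨u, W({ã_n},{b̃⁺_n}) u⟩ for all u ∈ ℓ²(ℤ). -/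
/-!
Both differences `W({a},{b}) - W({ã},{b̃⁻})` and `W({ã},{b̃⁺}) - W({a},{b})` are Jacobi operators
with off-diagonal entries `±cₙ`, `cₙ = (aₙ - 1)₊ ≥ 0`, and diagonal entries `dₙ + cₙ₋₁ + cₙ` with
`dₙ = [bₙ]_± ≥ 0`. Splitting the diagonal `cₙ₋₁ + cₙ` between the two edges at site `n`, the
quadratic form of such an operator is `∑ dₙ |uₙ|² + ∑ cₙ |uₙ ± uₙ₊₁|² ≥ 0`.
-/

/-- `ℓ²(ℤ)`: the Hilbert space of square-summable complex sequences indexed by `ℤ`. -/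
noncomputable abbrev L2Z := lp (fun _ : ℤ => ℂ) 2

open scoped ComplexConjugate

lemma lp.summable_norm_sq {α : Type*} {E : α → Type*} [∀ i, NormedAddCommGroup (E i)]
    (f : lp E 2) : Summable fun i => ‖f i‖ ^ 2 := by
  simpa using (lp.hasSum_norm (p := 2) (by norm_num) f).summable

lemma lp.hasSum_re_conj_mul {α : Type*} (f g : lp (fun _ : α => ℂ) 2) :
    HasSum (fun i => (conj (f i) * g i).re) (inner ℂ f g).re := by
  simpa only [RCLike.inner_apply, mul_comm] using Complex.hasSum_re (lp.hasSum_inner f g)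

lemma sq_norm_add_ofReal_mul (x y : ℂ) (ε : ℝ) :
    ‖x + ε * y‖ ^ 2 = ‖x‖ ^ 2 + 2 * ε * (conj x * y).re + ε ^ 2 * ‖y‖ ^ 2 := by
  simp only [Complex.sq_norm, Complex.normSq_apply, Complex.add_re, Complex.add_im,
    Complex.mul_re, Complex.mul_im, Complex.conj_re, Complex.conj_im, Complex.ofReal_re,
    Complex.ofReal_im]
  ring

lemma summable_re_conj_mul_succ {u : ℤ → ℂ} (hu : Summable fun n => ‖u n‖ ^ 2) :
    Summable fun n => (conj (u n) * u (n + 1)).re := by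
  have hu₁ : Summable fun n => ‖u (n + 1)‖ ^ 2 := (Equiv.addRight (1 : ℤ)).summable_iff.2 hu
  refine ((hu.add hu₁).div_const 2).of_norm_bounded fun n => ?_
  calc ‖(conj (u n) * u (n + 1)).re‖ ≤ ‖conj (u n) * u (n + 1)‖ := Complex.abs_re_le_norm _
    _ = ‖u n‖ * ‖u (n + 1)‖ := by simp
    _ ≤ (‖u n‖ ^ 2 + ‖u (n + 1)‖ ^ 2) / 2 := by nlinarith [two_mul_le_add_sq ‖u n‖ ‖u (n + 1)‖]

lemma summable_mul_of_nonneg_of_le {ι : Type*} {f c : ι → ℝ} {C : ℝ} (hf : Summable f)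
    (hc : ∀ n, 0 ≤ c n) (hcC : ∀ n, c n ≤ C) : Summable fun n => c n * f n :=
  (hf.abs.mul_left C).of_norm_bounded fun n => by
    rw [Real.norm_eq_abs, abs_mul, abs_of_nonneg (hc n)]
    exact mul_le_mul_of_nonneg_right (hcC n) (abs_nonneg _)

section JacobiForm

variable {u w : ℤ → ℂ} {c d : ℤ → ℝ} {ε : ℝ}

lemma re_conj_mul_jacobi
    (hw : ∀ n, w n = ((ε * c (n - 1) : ℝ) : ℂ) * u (n - 1)
      + ((d n + c (n - 1) + c n : ℝ) : ℂ) * u n + ((ε * c n : ℝ) : ℂ) * u (n + 1)) (n : ℤ) :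
    (conj (u n) * w n).re = d n * ‖u n‖ ^ 2
      + c (n - 1) * (‖u n‖ ^ 2 + ε * (conj (u (n - 1)) * u n).re)
      + c n * (‖u n‖ ^ 2 + ε * (conj (u n) * u (n + 1)).re) := by
  rw [hw n]
  simp only [mul_add, Complex.add_re, Complex.mul_re, Complex.mul_im, Complex.conj_re,
    Complex.conj_im, Complex.ofReal_re, Complex.ofReal_im, Complex.sq_norm, Complex.normSq_apply]
  ring

theorem jacobi_form_nonneg {C s : ℝ} (hu : Summable fun n => ‖u n‖ ^ 2)
    (hc : ∀ n, 0 ≤ c n) (hcC : ∀ n, c n ≤ C) (hd : ∀ n, 0 ≤ d n) (hε : ε ^ 2 = 1)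
    (hw : ∀ n, w n = ((ε * c (n - 1) : ℝ) : ℂ) * u (n - 1)
      + ((d n + c (n - 1) + c n : ℝ) : ℂ) * u n + ((ε * c n : ℝ) : ℂ) * u (n + 1))
    (hs : HasSum (fun n => (conj (u n) * w n).re) s) : 0 ≤ s := by
  set p : ℤ → ℝ := fun n => ‖u n‖ ^ 2
  set r : ℤ → ℝ := fun n => (conj (u n) * u (n + 1)).re
  have hr : Summable r := summable_re_conj_mul_succ hu
  have hp₁ : Summable fun n => p (n + 1) := (Equiv.addRight (1 : ℤ)).summable_iff.2 hu
  -- the share of the edge `{n, n+1}` in the diagonal term at `n`, resp. at `n + 1`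
  obtain ⟨σ, hσ⟩ : Summable fun n => c n * (p n + ε * r n) :=
    summable_mul_of_nonneg_of_le (hu.add (hr.mul_left ε)) hc hcC
  obtain ⟨σ', hσ'⟩ : Summable fun n => c n * (p (n + 1) + ε * r n) :=
    summable_mul_of_nonneg_of_le (hp₁.add (hr.mul_left ε)) hc hcC
  have hσ'_shift : HasSum (fun n => c (n - 1) * (p n + ε * r (n - 1))) σ' := by
    rw [← (Equiv.addRight (1 : ℤ)).hasSum_iff]
    simpa [Function.comp_def] using hσ'
  have hdiag : 0 ≤ s - (σ' + σ) := by
    refine (hs.sub (hσ'_shift.add hσ)).nonneg fun n => ?_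
    rw [re_conj_mul_jacobi hw n]
    simp only [p, r, sub_add_cancel]
    linarith [mul_nonneg (hd n) (sq_nonneg ‖u n‖)]
  have hedges : 0 ≤ σ' + σ := by
    refine (hσ'.add hσ).nonneg fun n => ?_
    have hsq := sq_norm_add_ofReal_mul (u n) (u (n + 1)) ε
    rw [hε, one_mul] at hsq
    have hedge : c n * (p (n + 1) + ε * r n) + c n * (p n + ε * r n)
        = c n * ‖u n + ε * u (n + 1)‖ ^ 2 := by
      simp only [p, r, hsq]; ring
    rw [hedge]
    exact mul_nonneg (hc n) (sq_nonneg _)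
  linarith

end JacobiForm

theorem jacobi_bracketing_general
    (a b : ℤ → ℝ)
    (ha_bdd : ∃ C : ℝ, ∀ n, |a n| ≤ C)
    (J Jplus Jminus : L2Z →L[ℂ] L2Z)
    (hJ : ∀ (u : L2Z) (n : ℤ),
      (J u) n = (a (n - 1) : ℂ) * u (n - 1) + (b n : ℂ) * u n + (a n : ℂ) * u (n + 1))
    (hJplus : ∀ (u : L2Z) (n : ℤ),
      (Jplus u) n = ((min (a (n - 1)) 1 : ℝ) : ℂ) * u (n - 1)
        + ((max (b n) 0 + max (a (n - 1) - 1) 0 + max (a n - 1) 0 : ℝ) : ℂ) * u n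
        + ((min (a n) 1 : ℝ) : ℂ) * u (n + 1))
    (hJminus : ∀ (u : L2Z) (n : ℤ),
      (Jminus u) n = ((min (a (n - 1)) 1 : ℝ) : ℂ) * u (n - 1)
        + ((-(max (-b n) 0) - max (a (n - 1) - 1) 0 - max (a n - 1) 0 : ℝ) : ℂ) * u n
        + ((min (a n) 1 : ℝ) : ℂ) * u (n + 1)) :
    ∀ u : L2Z,
      (inner ℂ u (Jminus u) : ℂ).re ≤ (inner ℂ u (J u) : ℂ).re ∧
      (inner ℂ u (J u) : ℂ).re ≤ (inner ℂ u (Jplus u) : ℂ).re := by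
  obtain ⟨C, hC⟩ := ha_bdd
  set c : ℤ → ℝ := fun n => max (a n - 1) 0
  have hc : ∀ n, 0 ≤ c n := fun n => le_max_right _ _
  have hcC : ∀ n, c n ≤ C := fun n =>
    max_le (by linarith [le_abs_self (a n), hC n]) ((abs_nonneg _).trans (hC n))
  have hmin : ∀ n, min (a n) 1 = a n - c n := fun n => by
    rcases le_total (a n) 1 with h | h <;> simp [c, h]
  intro u
  constructor
  · rw [← sub_nonneg, ← Complex.sub_re, ← inner_sub_right]
    refine jacobi_form_nonneg (lp.summable_norm_sq u) hc hcC (d := fun n => b n + max (-b n) 0)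
      (fun n => by linarith [le_max_left (-b n) 0]) (one_pow 2) (fun n => ?_)
      (lp.hasSum_re_conj_mul u _)
    rw [lp.coeFn_sub, Pi.sub_apply, hJ, hJminus, hmin, hmin]
    push_cast
    ring
  · rw [← sub_nonneg, ← Complex.sub_re, ← inner_sub_right]
    refine jacobi_form_nonneg (lp.summable_norm_sq u) hc hcC (d := fun n => max (b n) 0 - b n)
      (fun n => by linarith [le_max_left (b n) 0]) neg_one_sq (fun n => ?_)
      (lp.hasSum_re_conj_mul u _)
    rw [lp.coeFn_sub, Pi.sub_apply, hJ, hJplus, hmin, hmin]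
    push_cast
    ring

/-- **Operator bracketing for Jacobi operators.** Let `{a_n}`, `{b_n}` be real bounded
sequences, `ã_n = min(a_n, 1)`, `b̃⁺_n = [b_n]_+ + (a_{n-1}-1)_+ + (a_n-1)_+` and
`b̃⁻_n = -[b_n]_- - (a_{n-1}-1)_+ - (a_n-1)_+`. Then the Jacobi operators satisfy
`W({ã_n},{b̃⁻_n}) ≤ W({a_n},{b_n}) ≤ W({ã_n},{b̃⁺_n})` in the sense of quadratic forms. -/
theorem jacobi_bracketing
    (a b : ℤ → ℝ)
    (ha_bdd : ∃ C : ℝ, ∀ n, |a n| ≤ C) (hb_bdd : ∃ C : ℝ, ∀ n, |b n| ≤ C)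
    (J Jplus Jminus : L2Z →L[ℂ] L2Z)
    (hJ : ∀ (u : L2Z) (n : ℤ),
      (J u) n = (a (n - 1) : ℂ) * u (n - 1) + (b n : ℂ) * u n + (a n : ℂ) * u (n + 1))
    (hJplus : ∀ (u : L2Z) (n : ℤ),
      (Jplus u) n = ((min (a (n - 1)) 1 : ℝ) : ℂ) * u (n - 1)
        + ((max (b n) 0 + max (a (n - 1) - 1) 0 + max (a n - 1) 0 : ℝ) : ℂ) * u n
        + ((min (a n) 1 : ℝ) : ℂ) * u (n + 1))
    (hJminus : ∀ (u : L2Z) (n : ℤ),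
      (Jminus u) n = ((min (a (n - 1)) 1 : ℝ) : ℂ) * u (n - 1)
        + ((-(max (-b n) 0) - max (a (n - 1) - 1) 0 - max (a n - 1) 0 : ℝ) : ℂ) * u n
        + ((min (a n) 1 : ℝ) : ℂ) * u (n + 1)) :
    ∀ u : L2Z,
      (inner ℂ u (Jminus u) : ℂ).re ≤ (inner ℂ u (J u) : ℂ).re ∧
      (inner ℂ u (J u) : ℂ).re ≤ (inner ℂ u (Jplus u) : ℂ).re :=
  jacobi_bracketing_general a b ha_bdd J Jplus Jminus hJ hJplus hJminus
end

section
/- Let H be a Hilbert space, β a real number, and X₁, X₂ bounded self-adjoint operators on H such that β·I − X₁ and β·I − X₂ are both positive and invertible. Then for every λ ∈ [0,1], the operator β·I − (λX₁ + (1−λ)X₂) is positive and invertible and (β·I − λX₁ − (1−λ)X₂)^{−1} ≤ λ(β·I − X₁)^{−1} + (1−λ)(β·I − X₂)^{−1} in the Loewner order. -/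
/-!
Write `A = βI - X₁`, `B = βI - X₂`, so that `βI - (λX₁ + (1-λ)X₂) = λA + (1-λ)B =: C`, which is
bounded below by the smaller of the bounds of `A` and `B`, hence invertible. For a positive
invertible `T`, expanding `0 ≤ ⟪T⁻¹u - v, T (T⁻¹u - v)⟫` gives
`2 re ⟪u, v⟫ ≤ re ⟪v, T v⟫ + re ⟪u, T⁻¹ u⟫` for all `v`, with equality at `v = T⁻¹u`. Taking
`v = C⁻¹u` for both `T = A` and `T = B` and averaging with weights `λ, 1-λ` yields
`re ⟪u, C⁻¹u⟫ ≤ λ re ⟪u, A⁻¹u⟫ + (1-λ) re ⟪u, B⁻¹u⟫`.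
-/

open RCLike
open scoped InnerProductSpace

namespace ContinuousLinearMap

variable {𝕜 E : Type*} [RCLike 𝕜] [NormedAddCommGroup E] [InnerProductSpace 𝕜 E]

def IsUniformlyPositive (T : E →L[𝕜] E) : Prop :=
  ∃ c : ℝ, 0 < c ∧ ∀ u : E, c * ‖u‖ ^ 2 ≤ re ⟪u, T u⟫_𝕜

theorem re_inner_smul_add_smul_apply (a b : ℝ) (S T : E →L[𝕜] E) (u : E) :
    re ⟪u, ((a : 𝕜) • S + (b : 𝕜) • T) u⟫_𝕜 = a * re ⟪u, S u⟫_𝕜 + b * re ⟪u, T u⟫_𝕜 := by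
  simp only [add_apply, smul_apply, inner_add_right, inner_smul_right, map_add, re_ofReal_mul]

namespace IsUniformlyPositive

variable {T A B : E →L[𝕜] E}

theorem isUnit [CompleteSpace E] (hT : T.IsUniformlyPositive) : IsUnit T := by
  obtain ⟨c, hc, hcT⟩ := hT
  refine isUnit_of_forall_le_norm_inner_map T (c := ⟨c, hc.le⟩) hc fun u => ?_
  calc ‖u‖ ^ 2 * c = c * ‖u‖ ^ 2 := mul_comm _ _
    _ ≤ re ⟪u, T u⟫_𝕜 := hcT u
    _ = re ⟪T u, u⟫_𝕜 := inner_re_symm _ _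
    _ ≤ ‖⟪T u, u⟫_𝕜‖ := re_le_norm _

theorem isPositive [CompleteSpace E] (hT : T.IsUniformlyPositive) (hT' : IsSelfAdjoint T) :
    T.IsPositive := by
  obtain ⟨c, hc, hcT⟩ := hT
  refine isPositive_def'.2 ⟨hT', fun u => ?_⟩
  rw [reApplyInnerSelf_apply, inner_re_symm]
  exact (by positivity : 0 ≤ c * ‖u‖ ^ 2).trans (hcT u)

theorem convexComb (hA : A.IsUniformlyPositive) (hB : B.IsUniformlyPositive) {l : ℝ}
    (hl0 : 0 ≤ l) (hl1 : l ≤ 1) : ((l : 𝕜) • A + ((1 - l : ℝ) : 𝕜) • B).IsUniformlyPositive := by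
  obtain ⟨c₁, hc₁, hA⟩ := hA
  obtain ⟨c₂, hc₂, hB⟩ := hB
  refine ⟨min c₁ c₂, lt_min hc₁ hc₂, fun u => ?_⟩
  have hu : 0 ≤ ‖u‖ ^ 2 := by positivity
  have hl1' : 0 ≤ 1 - l := sub_nonneg.2 hl1
  rw [re_inner_smul_add_smul_apply]
  calc min c₁ c₂ * ‖u‖ ^ 2
      = l * (min c₁ c₂ * ‖u‖ ^ 2) + (1 - l) * (min c₁ c₂ * ‖u‖ ^ 2) := by ring
    _ ≤ l * re ⟪u, A u⟫_𝕜 + (1 - l) * re ⟪u, B u⟫_𝕜 := by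
      gcongr
      · exact (mul_le_mul_of_nonneg_right (min_le_left _ _) hu).trans (hA u)
      · exact (mul_le_mul_of_nonneg_right (min_le_right _ _) hu).trans (hB u)

end IsUniformlyPositive

theorem apply_inverse_apply {T : E →L[𝕜] E} (hT : IsUnit T) (u : E) : T (Ring.inverse T u) = u :=
  congr($(Ring.mul_inverse_cancel T hT) u)

namespace IsPositive

variable {T A B : E →L[𝕜] E}

theorem two_mul_re_inner_le (hT : T.IsPositive) (hU : IsUnit T) (u v : E) :
    2 * re ⟪u, v⟫_𝕜 ≤ re ⟪v, T v⟫_𝕜 + re ⟪u, Ring.inverse T u⟫_𝕜 := by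
  set w := Ring.inverse T u
  have hTw : T w = u := apply_inverse_apply hU u
  have hnonneg := hT.re_inner_nonneg_right (w - v)
  rw [map_sub, hTw, inner_sub_left, inner_sub_right, inner_sub_right,
    ← hT.inner_left_eq_inner_right w v, hTw, map_sub, map_sub, map_sub,
    inner_re_symm w u, inner_re_symm v u] at hnonneg
  linarith

theorem re_inner_inverse_convexComb_le (hA : A.IsPositive) (hB : B.IsPositive)
    (hAu : IsUnit A) (hBu : IsUnit B) {l : ℝ} (hl0 : 0 ≤ l) (hl1 : l ≤ 1)
    (hC : IsUnit ((l : 𝕜) • A + ((1 - l : ℝ) : 𝕜) • B)) (u : E) :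
    re ⟪u, Ring.inverse ((l : 𝕜) • A + ((1 - l : ℝ) : 𝕜) • B) u⟫_𝕜 ≤
      l * re ⟪u, Ring.inverse A u⟫_𝕜 + (1 - l) * re ⟪u, Ring.inverse B u⟫_𝕜 := by
  set v := Ring.inverse ((l : 𝕜) • A + ((1 - l : ℝ) : 𝕜) • B) u
  have hv : re ⟪u, v⟫_𝕜 = l * re ⟪v, A v⟫_𝕜 + (1 - l) * re ⟪v, B v⟫_𝕜 := by
    rw [← re_inner_smul_add_smul_apply, apply_inverse_apply hC, inner_re_symm]
  have hA' := mul_le_mul_of_nonneg_left (hA.two_mul_re_inner_le hAu u v) hl0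
  have hB' := mul_le_mul_of_nonneg_left (hB.two_mul_re_inner_le hBu u v) (sub_nonneg.2 hl1)
  linarith

end IsPositive

end ContinuousLinearMap

open ContinuousLinearMap in
/-- **Operator convexity of the resolvent (Lemma 3).** Let `β ∈ ℝ` and let `X₁, X₂` be
bounded self-adjoint operators on a Hilbert space `H` with `βI - X₁ > 0` and `βI - X₂ > 0`
(positive and invertible, i.e. `≥ cI` for some `c > 0`). Then for `λ ∈ [0,1]` the operator
`βI - (λX₁ + (1-λ)X₂)` is positive and invertible, and
`(βI - λX₁ - (1-λ)X₂)⁻¹ ≤ λ(βI - X₁)⁻¹ + (1-λ)(βI - X₂)⁻¹` in the Loewner order. -/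
theorem resolvent_operator_convex
    {H : Type*} [NormedAddCommGroup H] [InnerProductSpace ℂ H] [CompleteSpace H]
    (β : ℝ) (X₁ X₂ : H →L[ℂ] H)
    (hX₁ : IsSelfAdjoint X₁) (hX₂ : IsSelfAdjoint X₂)
    (h₁ : ∃ c : ℝ, 0 < c ∧ ∀ u : H,
      c * ‖u‖ ^ 2 ≤ (inner ℂ u (((β : ℂ) • (1 : H →L[ℂ] H) - X₁) u) : ℂ).re)
    (h₂ : ∃ c : ℝ, 0 < c ∧ ∀ u : H,
      c * ‖u‖ ^ 2 ≤ (inner ℂ u (((β : ℂ) • (1 : H →L[ℂ] H) - X₂) u) : ℂ).re)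
    (l : ℝ) (hl : l ∈ Set.Icc (0:ℝ) 1) :
    (∃ c : ℝ, 0 < c ∧ ∀ u : H, c * ‖u‖ ^ 2 ≤
      (inner ℂ u (((β : ℂ) • (1 : H →L[ℂ] H) - ((l : ℂ) • X₁ + ((1 - l : ℝ) : ℂ) • X₂)) u) : ℂ).re) ∧
    IsUnit ((β : ℂ) • (1 : H →L[ℂ] H) - ((l : ℂ) • X₁ + ((1 - l : ℝ) : ℂ) • X₂)) ∧
    ∀ u : H,
      (inner ℂ u ((Ring.inverse ((β : ℂ) • (1 : H →L[ℂ] H) - ((l : ℂ) • X₁ + ((1 - l : ℝ) : ℂ) • X₂))) u) : ℂ).re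
        ≤ (inner ℂ u (((l : ℂ) • Ring.inverse ((β : ℂ) • (1 : H →L[ℂ] H) - X₁)
            + ((1 - l : ℝ) : ℂ) • Ring.inverse ((β : ℂ) • (1 : H →L[ℂ] H) - X₂)) u) : ℂ).re := by
  obtain ⟨hl0, hl1⟩ := hl
  set A := (β : ℂ) • (1 : H →L[ℂ] H) - X₁
  set B := (β : ℂ) • (1 : H →L[ℂ] H) - X₂
  have hA : A.IsUniformlyPositive := h₁
  have hB : B.IsUniformlyPositive := h₂
  have hβ : IsSelfAdjoint ((β : ℂ) • (1 : H →L[ℂ] H)) :=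
    IsSelfAdjoint.smul (Complex.conj_ofReal β) (.one _)
  have hcomb : (β : ℂ) • (1 : H →L[ℂ] H) - ((l : ℂ) • X₁ + ((1 - l : ℝ) : ℂ) • X₂) =
      (l : ℂ) • A + ((1 - l : ℝ) : ℂ) • B := by
    simp only [A, B, Complex.ofReal_sub, Complex.ofReal_one]
    module
  have hCpos := hA.convexComb hB hl0 hl1
  rw [hcomb]
  refine ⟨hCpos, hCpos.isUnit, fun u => ?_⟩
  exact ((hA.isPositive (hβ.sub hX₁)).re_inner_inverse_convexComb_le (hB.isPositive (hβ.sub hX₂))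
    hA.isUnit hB.isUnit hl0 hl1 hCpos.isUnit u).trans_eq
    (re_inner_smul_add_smul_apply _ _ _ _ u).symm
end
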